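/- Let p ≤ n and let {A,B} be an (m,p,n)-GMP with GSVD as in the context, with generalized singular values (αᵢ, βᵢ); in particular β₁ = ⋯ = β_{n−p} = 0. Then for every n−p+1 ≤ i ≤ n, βᵢ equals the difference of maxima: βᵢ = max_{Ξ₃ ∈ 𝕌_n, Ξ₄ ∈ 𝕌_p} |tr(Ξ₃ (AᴴA + BᴴB)^{-1/2} Bᴴ Ξ₄ 𝒲_i)| − max_{Ξ₃ ∈ 𝕌_n, Ξ₄ ∈ 𝕌_p} |tr(Ξ₃ (AᴴA + BᴴB)^{-1/2} Bᴴ Ξ₄ 𝒲_{i+1})|. -/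

import Mathlib

/-!
Since `S² = AᴴA + BᴴB = RᴴR`, the matrix `G = S⁻¹Rᴴ` is unitary and `S⁻¹Bᴴ = G Σ_Bᴴ Vᴴ`, so by
unitary invariance the maximum of `|tr(Ξ₃ S⁻¹ Bᴴ Ξ₄ 𝒲_j)|` is that of `|tr(Q Σ_Bᴴ P 𝒲_j)|` over
unitary `Q`, `P`. This trace is `∑_b β_b ∑_{a ∈ s} Q'_{ab} P_{ba}`, where `s` is the set of rows
selected by `𝒲_j` and `Q'` is the trailing `p × p` block of `Q`. Rows and columns of `Q'` and `P`
have norm at most one, so by AM-GM the trace is bounded by `∑_b β_b w_b` with weights `0 ≤ w_b ≤ 1`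
of total mass at most `#s`; as `β` is increasing, the bathtub principle bounds this by the sum of
the `β`'s indexed by `s`, which `Q = P = 1` attains. Consecutive maxima thus differ by `β_i`.
-/

open Matrix Finset
open scoped ComplexOrder

theorem Finset.sum_mul_le_sum_of_sum_le_card {ι : Type*} [Fintype ι] [DecidableEq ι]
    (s : Finset ι) {γ w : ι → ℝ} (hγ : ∀ a, 0 ≤ γ a) (hsep : ∀ a ∈ s, ∀ b ∉ s, γ b ≤ γ a)
    (hw0 : ∀ a, 0 ≤ w a) (hw1 : ∀ a, w a ≤ 1) (hw : ∑ a, w a ≤ #s) :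
    ∑ a, γ a * w a ≤ ∑ a ∈ s, γ a := by
  -- Bathtub principle: compare both sides with a level `c` separating `γ` on `s` from `γ` off `s`.
  obtain ⟨c, hc0, hcs, hcsc⟩ : ∃ c, 0 ≤ c ∧ (∀ a ∈ s, c ≤ γ a) ∧ ∀ b ∈ sᶜ, γ b ≤ c := by
    rcases sᶜ.eq_empty_or_nonempty with h | h
    · exact ⟨0, le_rfl, fun a _ => hγ a, by simp [h]⟩
    · obtain ⟨b₀, hb₀, hmax⟩ := sᶜ.exists_max_image γ h
      exact ⟨γ b₀, hγ b₀, fun a ha => hsep a ha b₀ (mem_compl.1 hb₀), hmax⟩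
  have hw_compl : ∑ b ∈ sᶜ, w b ≤ ∑ a ∈ s, (1 - w a) := by
    rw [sum_sub_distrib, sum_const, nsmul_one]
    linarith [sum_add_sum_compl s w]
  have hγw_compl : ∑ b ∈ sᶜ, γ b * w b ≤ ∑ a ∈ s, γ a * (1 - w a) :=
    calc ∑ b ∈ sᶜ, γ b * w b ≤ ∑ b ∈ sᶜ, c * w b :=
          sum_le_sum fun b hb => mul_le_mul_of_nonneg_right (hcsc b hb) (hw0 b)
      _ ≤ ∑ a ∈ s, c * (1 - w a) := by
          rw [← mul_sum, ← mul_sum]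
          exact mul_le_mul_of_nonneg_left hw_compl hc0
      _ ≤ ∑ a ∈ s, γ a * (1 - w a) :=
          sum_le_sum fun a ha => mul_le_mul_of_nonneg_right (hcs a ha) (by linarith [hw1 a])
  have hsplit : ∑ a ∈ s, γ a * (1 - w a) = ∑ a ∈ s, γ a - ∑ a ∈ s, γ a * w a := by
    rw [← sum_sub_distrib]
    simp only [mul_sub, mul_one]
  linarith [sum_add_sum_compl s (fun a => γ a * w a)]

theorem Fintype.sum_comp_le_sum_of_nonneg {α β : Type*} [Fintype α] [Fintype β] (e : α ↪ β)
    {g : β → ℝ} (hg : ∀ b, 0 ≤ g b) : ∑ a, g (e a) ≤ ∑ b, g b := by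
  rw [← sum_map univ e g]
  exact sum_le_univ_sum_of_nonneg fun b => hg b

theorem norm_sum_mul_le_sum_add_sq_div_two {𝕜 α : Type*} [RCLike 𝕜] (s : Finset α)
    (x y : α → 𝕜) : ‖∑ a ∈ s, x a * y a‖ ≤ ∑ a ∈ s, (‖x a‖ ^ 2 + ‖y a‖ ^ 2) / 2 :=
  (norm_sum_le _ _).trans <| sum_le_sum fun a _ => by
    rw [norm_mul]
    nlinarith [sq_nonneg (‖x a‖ - ‖y a‖)]

theorem ciSup_ciSup_eq_of_forall_le_of_eq {α β : Type*} [Nonempty α] [Nonempty β]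
    {f : α → β → ℝ} {c : ℝ} (hle : ∀ a b, f a b ≤ c) {a₀ : α} {b₀ : β} (heq : f a₀ b₀ = c) :
    ⨆ a, ⨆ b, f a b = c := by
  have hbdd : ∀ a, BddAbove (Set.range (f a)) := fun a => ⟨c, Set.forall_mem_range.2 (hle a)⟩
  refine le_antisymm (ciSup_le fun a => ciSup_le (hle a)) ?_
  calc c = f a₀ b₀ := heq.symm
    _ ≤ ⨆ b, f a₀ b := le_ciSup (hbdd a₀) b₀
    _ ≤ ⨆ a, ⨆ b, f a b :=
        le_ciSup (f := fun a => ⨆ b, f a b)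
          ⟨c, Set.forall_mem_range.2 fun a => ciSup_le (hle a)⟩ a₀

namespace Matrix

variable {𝕜 : Type*} [RCLike 𝕜]

def RowColNormSqLeOne {m n : Type*} [Fintype m] [Fintype n] (C : Matrix m n 𝕜) : Prop :=
  (∀ a, ∑ b, ‖C a b‖ ^ 2 ≤ 1) ∧ ∀ b, ∑ a, ‖C a b‖ ^ 2 ≤ 1

theorem sum_norm_sq_eq_re_mul_conjTranspose_apply {m n : Type*} [Fintype n] (C : Matrix m n 𝕜)
    (a : m) : ∑ b, ‖C a b‖ ^ 2 = RCLike.re ((C * Cᴴ) a a) := by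
  simp only [mul_apply, conjTranspose_apply, RCLike.star_def, RCLike.mul_conj, map_sum]
  norm_cast

theorem sum_norm_sq_eq_re_conjTranspose_mul_apply {m n : Type*} [Fintype m] (C : Matrix m n 𝕜)
    (b : n) : ∑ a, ‖C a b‖ ^ 2 = RCLike.re ((Cᴴ * C) b b) := by
  simp only [mul_apply, conjTranspose_apply, RCLike.star_def, mul_comm, RCLike.mul_conj, map_sum]
  norm_cast

theorem RowColNormSqLeOne.of_mem_unitaryGroup {n : Type*} [Fintype n] [DecidableEq n]
    {U : Matrix n n 𝕜} (hU : U ∈ unitaryGroup n 𝕜) : U.RowColNormSqLeOne := by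
  refine ⟨fun a => ?_, fun b => ?_⟩
  · rw [sum_norm_sq_eq_re_mul_conjTranspose_apply, ← star_eq_conjTranspose,
      mem_unitaryGroup_iff.mp hU, one_apply_eq, RCLike.one_re]
  · rw [sum_norm_sq_eq_re_conjTranspose_mul_apply, ← star_eq_conjTranspose,
      mem_unitaryGroup_iff'.mp hU, one_apply_eq, RCLike.one_re]

theorem RowColNormSqLeOne.submatrix {m n ι κ : Type*} [Fintype m] [Fintype n] [Fintype ι]
    [Fintype κ] {C : Matrix m n 𝕜} (hC : C.RowColNormSqLeOne) (e : ι ↪ m) (f : κ ↪ n) :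
    (C.submatrix e f).RowColNormSqLeOne :=
  ⟨fun a => (Fintype.sum_comp_le_sum_of_nonneg f fun _ => by positivity).trans (hC.1 (e a)),
    fun b => (Fintype.sum_comp_le_sum_of_nonneg e (g := fun a => ‖C a (f b)‖ ^ 2)
      fun _ => by positivity).trans (hC.2 (f b))⟩

theorem inv_mul_conjTranspose_mem_unitaryGroup {n : Type*} [Fintype n] [DecidableEq n]
    {S R : Matrix n n 𝕜} (hS : S.IsHermitian) (hSR : S * S = Rᴴ * R) (hR : IsUnit R.det) :
    S⁻¹ * Rᴴ ∈ unitaryGroup n 𝕜 := by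
  have hRH : IsUnit Rᴴ.det := by
    rw [det_conjTranspose]
    exact hR.star
  rw [mem_unitaryGroup_iff', star_eq_conjTranspose, conjTranspose_mul, conjTranspose_conjTranspose,
    conjTranspose_nonsing_inv, hS.eq]
  calc R * S⁻¹ * (S⁻¹ * Rᴴ) = R * (S * S)⁻¹ * Rᴴ := by
        simp only [Matrix.mul_inv_rev, Matrix.mul_assoc]
    _ = 1 := by
        rw [hSR, Matrix.mul_inv_rev, ← Matrix.mul_assoc, mul_nonsing_inv _ hR, Matrix.one_mul,
          nonsing_inv_mul _ hRH]

variable {ι : Type*} [Fintype ι] [DecidableEq ι]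

theorem trace_diagonal_mul_diagonal_mul (s : Finset ι) (C P : Matrix ι ι 𝕜) (γ : ι → ℝ) :
    trace (diagonal (fun a => if a ∈ s then 1 else 0) * C * diagonal (fun b => (γ b : 𝕜)) * P) =
      ∑ b, (γ b : 𝕜) * ∑ a ∈ s, C a b * P b a := by
  simp only [trace, diag_apply, mul_apply (M := _ * _ * _), mul_diagonal, diagonal_mul, ite_mul,
    one_mul, zero_mul, sum_ite_irrel, sum_const_zero, Fintype.sum_ite_mem, mul_sum]
  rw [sum_comm]
  exact sum_congr rfl fun b _ => sum_congr rfl fun a _ => by ring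

theorem norm_trace_diagonal_mul_diagonal_mul_le {C P : Matrix ι ι 𝕜} (hC : C.RowColNormSqLeOne)
    (hP : P.RowColNormSqLeOne) (s : Finset ι) {γ : ι → ℝ} (hγ : ∀ a, 0 ≤ γ a)
    (hsep : ∀ a ∈ s, ∀ b ∉ s, γ b ≤ γ a) :
    ‖trace (diagonal (fun a => if a ∈ s then 1 else 0) * C * diagonal (fun b => (γ b : 𝕜)) * P)‖
      ≤ ∑ a ∈ s, γ a := by
  set w : ι → ℝ := fun b => ∑ a ∈ s, (‖C a b‖ ^ 2 + ‖P b a‖ ^ 2) / 2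
  have hw0 : ∀ b, 0 ≤ w b := fun b => sum_nonneg fun _ _ => by positivity
  have hw1 : ∀ b, w b ≤ 1 := fun b => by
    have hCb : ∑ a ∈ s, ‖C a b‖ ^ 2 ≤ 1 :=
      (sum_le_univ_sum_of_nonneg fun _ => by positivity).trans (hC.2 b)
    have hPb : ∑ a ∈ s, ‖P b a‖ ^ 2 ≤ 1 :=
      (sum_le_univ_sum_of_nonneg fun _ => by positivity).trans (hP.1 b)
    simp only [w, ← sum_div, sum_add_distrib]
    linarith
  have hw : ∑ b, w b ≤ #s := by
    have hw_swap : ∑ b, w b = ∑ a ∈ s, (∑ b, ‖C a b‖ ^ 2 + ∑ b, ‖P b a‖ ^ 2) / 2 := by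
      simp only [w, sum_comm (s := univ), ← sum_div, sum_add_distrib]
    rw [hw_swap, card_eq_sum_ones, Nat.cast_sum, Nat.cast_one]
    exact sum_le_sum fun a _ => by linarith [hC.1 a, hP.2 a]
  calc _ = ‖∑ b, (γ b : 𝕜) * ∑ a ∈ s, C a b * P b a‖ := by
        rw [trace_diagonal_mul_diagonal_mul]
    _ ≤ ∑ b, γ b * w b := (norm_sum_le _ _).trans <| sum_le_sum fun b _ => by
        rw [norm_mul, RCLike.norm_ofReal, abs_of_nonneg (hγ b)]
        exact mul_le_mul_of_nonneg_left (norm_sum_mul_le_sum_add_sq_div_two s _ _) (hγ b)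
    _ ≤ ∑ a ∈ s, γ a := sum_mul_le_sum_of_sum_le_card s hγ hsep hw0 hw1 hw

end Matrix

namespace GSVD

variable {p n : ℕ}

def tailEmb (hpn : p ≤ n) : Fin p ↪ Fin n :=
  ⟨fun k => ⟨k + (n - p), by omega⟩, fun a b h => by simpa [Fin.ext_iff] using h⟩

@[simp]
theorem tailEmb_val (hpn : p ≤ n) (k : Fin p) : (tailEmb hpn k : ℕ) = k + (n - p) := rfl

theorem tailEmb_eq_iff (hpn : p ≤ n) (k : Fin p) (l : Fin n) :
    tailEmb hpn k = l ↔ (l : ℕ) + p = n + k := by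
  rw [Fin.ext_iff, tailEmb_val]
  omega

theorem tailEmb_monotone (hpn : p ≤ n) : Monotone (tailEmb hpn) := fun a b h => by
  rw [Fin.le_def, tailEmb_val, tailEmb_val]
  exact Nat.add_le_add_right h _

def tailIncl (hpn : p ≤ n) : Matrix (Fin p) (Fin n) ℂ :=
  (1 : Matrix (Fin n) (Fin n) ℂ).submatrix (tailEmb hpn) id

theorem tailIncl_mul_mul_conjTranspose (hpn : p ≤ n) (M : Matrix (Fin n) (Fin n) ℂ) :
    tailIncl hpn * M * (tailIncl hpn)ᴴ = M.submatrix (tailEmb hpn) (tailEmb hpn) := by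
  ext a b
  simp [tailIncl, mul_apply, one_apply]

/- `sigmaB p β` is the paper's `Σ_B` and `calW p n j` its `𝒲_{j+1}` (indices are 0-based here):
row `k` of either has its only possible nonzero entry in column `tailEmb hpn k = k + (n - p)`,
and `calW p n j` keeps the rows in `calWRows p n j`. -/
def sigmaB (p : ℕ) (β : Fin n → ℝ) : Matrix (Fin p) (Fin n) ℂ :=
  Matrix.of fun k l => if (l : ℕ) + p = n + k then (β l : ℂ) else 0

def calW (p n j : ℕ) : Matrix (Fin p) (Fin n) ℂ :=
  Matrix.of fun k l => if (l : ℕ) + p = n + k ∧ p + j ≤ (k : ℕ) + n then 1 else 0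

def calWRows (p n j : ℕ) : Finset (Fin p) := univ.filter fun k => p + j ≤ (k : ℕ) + n

theorem sigmaB_eq (hpn : p ≤ n) (β : Fin n → ℝ) :
    sigmaB p β = diagonal (fun k => (β (tailEmb hpn k) : ℂ)) * tailIncl hpn := by
  ext k l
  simp only [sigmaB, tailIncl, of_apply, diagonal_mul, submatrix_apply, id, one_apply,
    tailEmb_eq_iff hpn]
  split_ifs with h
  · rw [(tailEmb_eq_iff hpn k l).2 h, mul_one]
  · rw [mul_zero]

theorem calW_eq (hpn : p ≤ n) (j : ℕ) :
    calW p n j = diagonal (fun k => if k ∈ calWRows p n j then (1 : ℂ) else 0) * tailIncl hpn := by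
  ext k l
  simp only [calW, calWRows, tailIncl, of_apply, diagonal_mul, submatrix_apply, id, one_apply,
    tailEmb_eq_iff, mem_filter, mem_univ, true_and]
  split_ifs <;> simp_all

theorem trace_mul_sigmaB_conjTranspose_mul_calW (hpn : p ≤ n) (β : Fin n → ℝ) (j : ℕ)
    (Q : Matrix (Fin n) (Fin n) ℂ) (P : Matrix (Fin p) (Fin p) ℂ) :
    trace (Q * (sigmaB p β)ᴴ * P * calW p n j) =
      trace (diagonal (fun k => if k ∈ calWRows p n j then (1 : ℂ) else 0) *
        Q.submatrix (tailEmb hpn) (tailEmb hpn) * diagonal (fun k => (β (tailEmb hpn k) : ℂ)) *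
        P) := by
  set E := tailIncl hpn
  set D := diagonal (fun k => (β (tailEmb hpn k) : ℂ))
  set Ds := diagonal (fun k => if k ∈ calWRows p n j then (1 : ℂ) else 0)
  have hD : Dᴴ = D := by simp [D, diagonal_conjTranspose]
  rw [sigmaB_eq hpn, calW_eq hpn, conjTranspose_mul, hD]
  calc trace (Q * (Eᴴ * D) * P * (Ds * E)) = trace (E * (Q * (Eᴴ * D) * P * Ds)) := by
        rw [← Matrix.mul_assoc _ Ds E, trace_mul_comm]
    _ = trace (Ds * (E * Q * Eᴴ * D * P)) := by
        rw [trace_mul_comm Ds]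
        simp only [Matrix.mul_assoc]
    _ = _ := by
        rw [tailIncl_mul_mul_conjTranspose]
        simp only [Matrix.mul_assoc]

theorem conjTranspose_sigmaB_mul_sigmaB (hpn : p ≤ n) {β : Fin n → ℝ}
    (hzero : ∀ l : Fin n, (l : ℕ) + p < n → β l = 0) :
    (sigmaB p β)ᴴ * sigmaB p β = diagonal (fun l => (β l : ℂ) ^ 2) := by
  ext l l'
  simp only [sigmaB, mul_apply, conjTranspose_apply, of_apply, diagonal_apply,
    ← tailEmb_eq_iff hpn, apply_ite star, star_zero, Complex.star_def, Complex.conj_ofReal]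
  by_cases hl : ∃ k, tailEmb hpn k = l
  · obtain ⟨k₀, rfl⟩ := hl
    rw [sum_eq_single k₀ (fun k _ hk => by simp [(tailEmb hpn).injective.ne hk]) (by simp)]
    split_ifs <;> simp_all [sq]
  · have hβ : β l = 0 := hzero l <| by
      by_contra h
      exact hl ⟨⟨l + p - n, by omega⟩, (tailEmb_eq_iff hpn _ _).2 (by dsimp only; omega)⟩
    simp [hβ]

theorem conjTranspose_mul_add_conjTranspose_mul_eq (hpn : p ≤ n) {m : ℕ}
    {A : Matrix (Fin m) (Fin n) ℂ} {B : Matrix (Fin p) (Fin n) ℂ} {V : Matrix (Fin p) (Fin p) ℂ}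
    (hV : V ∈ unitaryGroup (Fin p) ℂ) {R : Matrix (Fin n) (Fin n) ℂ} {β : Fin n → ℝ}
    (hzero : ∀ l : Fin n, (l : ℕ) + p < n → β l = 0) (hB : B = V * sigmaB p β * R)
    (hAA : Aᴴ * A = Rᴴ * diagonal (fun l => ((1 - β l ^ 2 : ℝ) : ℂ)) * R) :
    Aᴴ * A + Bᴴ * B = Rᴴ * R := by
  have hBB : Bᴴ * B = Rᴴ * diagonal (fun l => (β l : ℂ) ^ 2) * R := by
    rw [hB, ← conjTranspose_sigmaB_mul_sigmaB hpn hzero]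
    simp only [conjTranspose_mul, Matrix.mul_assoc]
    have hVV : Vᴴ * V = 1 := Unitary.star_mul_self_of_mem hV
    rw [← Matrix.mul_assoc Vᴴ V, hVV, Matrix.one_mul]
  have hsum :
      diagonal (fun l => ((1 - β l ^ 2 : ℝ) : ℂ)) + diagonal (fun l => (β l : ℂ) ^ 2) = 1 := by
    rw [diagonal_add, ← diagonal_one]
    congr 1
    funext l
    push_cast
    ring
  rw [hAA, hBB, ← Matrix.add_mul, ← Matrix.mul_add, hsum, Matrix.mul_one]

theorem iSup_iSup_norm_trace_mul_calW (hpn : p ≤ n) {m : ℕ} {A : Matrix (Fin m) (Fin n) ℂ}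
    {B : Matrix (Fin p) (Fin n) ℂ} {V : Matrix (Fin p) (Fin p) ℂ} (hV : V ∈ unitaryGroup (Fin p) ℂ)
    {R : Matrix (Fin n) (Fin n) ℂ} (hR : IsUnit R.det) {β : Fin n → ℝ} (hβ0 : ∀ l, 0 ≤ β l)
    (hmono : Monotone β) (hzero : ∀ l : Fin n, (l : ℕ) + p < n → β l = 0)
    (hB : B = V * sigmaB p β * R)
    (hAA : Aᴴ * A = Rᴴ * diagonal (fun l => ((1 - β l ^ 2 : ℝ) : ℂ)) * R)
    {S : Matrix (Fin n) (Fin n) ℂ} (hS : S.IsHermitian) (hSsq : S * S = Aᴴ * A + Bᴴ * B) (j : ℕ) :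
    ⨆ X3 : unitaryGroup (Fin n) ℂ, ⨆ X4 : unitaryGroup (Fin p) ℂ,
      ‖trace ((X3 : Matrix (Fin n) (Fin n) ℂ) * S⁻¹ * Bᴴ * (X4 : Matrix (Fin p) (Fin p) ℂ) *
        calW p n j)‖ = ∑ k ∈ calWRows p n j, β (tailEmb hpn k) := by
  set G := S⁻¹ * Rᴴ
  have hG : G ∈ unitaryGroup (Fin n) ℂ := inv_mul_conjTranspose_mem_unitaryGroup hS
    (hSsq.trans (conjTranspose_mul_add_conjTranspose_mul_eq hpn hV hzero hB hAA)) hR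
  have hfactor : ∀ (X3 : Matrix (Fin n) (Fin n) ℂ) (X4 : Matrix (Fin p) (Fin p) ℂ),
      X3 * S⁻¹ * Bᴴ * X4 * calW p n j = X3 * G * (sigmaB p β)ᴴ * (Vᴴ * X4) * calW p n j := by
    intro X3 X4
    rw [hB]
    simp only [G, conjTranspose_mul, Matrix.mul_assoc]
  have hsep : ∀ a ∈ calWRows p n j, ∀ b ∉ calWRows p n j,
      β (tailEmb hpn b) ≤ β (tailEmb hpn a) := fun a ha b hb => by
    simp only [calWRows, mem_filter, mem_univ, true_and, not_le] at ha hb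
    exact hmono (tailEmb_monotone hpn (Fin.le_def.2 (by omega)))
  refine ciSup_ciSup_eq_of_forall_le_of_eq (fun X3 X4 => ?_)
    (a₀ := ⟨star G, Unitary.star_mem hG⟩) (b₀ := ⟨V, hV⟩) ?_
  · rw [hfactor, trace_mul_sigmaB_conjTranspose_mul_calW hpn]
    exact norm_trace_diagonal_mul_diagonal_mul_le
      ((RowColNormSqLeOne.of_mem_unitaryGroup (mul_mem X3.2 hG)).submatrix _ _)
      (RowColNormSqLeOne.of_mem_unitaryGroup (mul_mem (Unitary.star_mem hV) X4.2)) _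
      (fun _ => hβ0 _) hsep
  · have hVV : Vᴴ * V = 1 := Unitary.star_mul_self_of_mem hV
    rw [hfactor, trace_mul_sigmaB_conjTranspose_mul_calW hpn, Unitary.star_mul_self_of_mem hG,
      hVV, submatrix_one_embedding, Matrix.mul_one, Matrix.mul_one, diagonal_mul_diagonal,
      trace_diagonal]
    simp only [ite_mul, one_mul, zero_mul, Fintype.sum_ite_mem]
    rw [← Complex.ofReal_sum, Complex.norm_real, Real.norm_of_nonneg (sum_nonneg fun _ _ => hβ0 _)]

theorem sum_calWRows_sub_sum_calWRows_succ (hpn : p ≤ n) (β : Fin n → ℝ) (i : Fin n)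
    (hip : n ≤ p + i) :
    ∑ k ∈ calWRows p n i, β (tailEmb hpn k) - ∑ k ∈ calWRows p n (i + 1), β (tailEmb hpn k) =
      β i := by
  set k₀ : Fin p := ⟨i + p - n, by omega⟩
  have hk₀ : tailEmb hpn k₀ = i := Fin.ext (by simp only [tailEmb_val, k₀]; omega)
  have hrows : calWRows p n i = insert k₀ (calWRows p n (i + 1)) := by
    ext k
    simp only [calWRows, mem_filter, mem_univ, true_and, mem_insert, Fin.ext_iff, k₀]
    omega
  have hk₀_notMem : k₀ ∉ calWRows p n (i + 1) := by
    simp only [calWRows, mem_filter, mem_univ, true_and, not_le, k₀]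
    omega
  rw [hrows, sum_insert hk₀_notMem, hk₀, add_sub_cancel_right]

end GSVD

theorem stmt7_general
    {m p n : ℕ} (hpn : p ≤ n)
    (A : Matrix (Fin m) (Fin n) ℂ) (B : Matrix (Fin p) (Fin n) ℂ)
    (V : Matrix (Fin p) (Fin p) ℂ) (hV : V ∈ Matrix.unitaryGroup (Fin p) ℂ)
    (R : Matrix (Fin n) (Fin n) ℂ) (hR : IsUnit R.det)
    (β : Fin n → ℝ)
    (hβ0 : ∀ k, 0 ≤ β k) (hmono : Monotone β)
    (hzero : ∀ k : Fin n, (k : ℕ) + p < n → β k = 0)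
    (hB : B = V * (Matrix.of fun (k : Fin p) (l : Fin n) =>
        if (l : ℕ) + p = n + (k : ℕ) then Complex.ofReal (β l) else 0) * R)
    (hAA : Aᴴ * A = Rᴴ * Matrix.diagonal (fun l => Complex.ofReal (1 - β l ^ 2)) * R)
    (S : Matrix (Fin n) (Fin n) ℂ) (hS : S.PosDef)
    (hSsq : S * S = Aᴴ * A + Bᴴ * B)
    (i : Fin n) (hip : n ≤ p + (i : ℕ)) :
    β i =
(⨆ X3 : Matrix.unitaryGroup (Fin n) ℂ, ⨆ X4 : Matrix.unitaryGroup (Fin p) ℂ,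
      Norm.norm (Matrix.trace ((X3 : Matrix (Fin n) (Fin n) ℂ) * S⁻¹ * Bᴴ *
        (X4 : Matrix (Fin p) (Fin p) ℂ) *
        Matrix.of (fun (k : Fin p) (l : Fin n) =>
          if (l : ℕ) + p = n + (k : ℕ) ∧ p + (i : ℕ) ≤ (k : ℕ) + n then (1 : ℂ) else 0)))) -
(⨆ X3 : Matrix.unitaryGroup (Fin n) ℂ, ⨆ X4 : Matrix.unitaryGroup (Fin p) ℂ,
      Norm.norm (Matrix.trace ((X3 : Matrix (Fin n) (Fin n) ℂ) * S⁻¹ * Bᴴ *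
        (X4 : Matrix (Fin p) (Fin p) ℂ) *
        Matrix.of (fun (k : Fin p) (l : Fin n) =>
          if (l : ℕ) + p = n + (k : ℕ) ∧ p + (i : ℕ) + 1 ≤ (k : ℕ) + n then (1 : ℂ) else 0)))) := by
  have hsup := GSVD.iSup_iSup_norm_trace_mul_calW hpn hV hR hβ0 hmono hzero hB hAA
    hS.isHermitian hSsq
  rw [← GSVD.sum_calWRows_sub_sum_calWRows_succ hpn β i hip, ← hsup, ← hsup]
  rfl

theorem stmt7
    {m p n : ℕ} (hpn : p ≤ n)
    (A : Matrix (Fin m) (Fin n) ℂ) (B : Matrix (Fin p) (Fin n) ℂ)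
    (hrank : (Matrix.fromRows A B).rank = n)
    (V : Matrix (Fin p) (Fin p) ℂ) (hV : V ∈ Matrix.unitaryGroup (Fin p) ℂ)
    (R : Matrix (Fin n) (Fin n) ℂ) (hR : IsUnit R.det)
    (β : Fin n → ℝ)
    (hβ0 : ∀ k, 0 ≤ β k) (hβ1 : ∀ k, β k ≤ 1) (hmono : Monotone β)
    (hzero : ∀ k : Fin n, (k : ℕ) + p < n → β k = 0)
    (hB : B = V * (Matrix.of fun (k : Fin p) (l : Fin n) =>
        if (l : ℕ) + p = n + (k : ℕ) then Complex.ofReal (β l) else 0) * R)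
    (hAA : Aᴴ * A = Rᴴ * Matrix.diagonal (fun l => Complex.ofReal (1 - β l ^ 2)) * R)
    (S : Matrix (Fin n) (Fin n) ℂ) (hS : S.PosDef)
    (hSsq : S * S = Aᴴ * A + Bᴴ * B)
    (i : Fin n) (hip : n ≤ p + (i : ℕ)) :
    β i =
(⨆ X3 : Matrix.unitaryGroup (Fin n) ℂ, ⨆ X4 : Matrix.unitaryGroup (Fin p) ℂ,
      Norm.norm (Matrix.trace ((X3 : Matrix (Fin n) (Fin n) ℂ) * S⁻¹ * Bᴴ *
        (X4 : Matrix (Fin p) (Fin p) ℂ) *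
        Matrix.of (fun (k : Fin p) (l : Fin n) =>
          if (l : ℕ) + p = n + (k : ℕ) ∧ p + (i : ℕ) ≤ (k : ℕ) + n then (1 : ℂ) else 0)))) -
(⨆ X3 : Matrix.unitaryGroup (Fin n) ℂ, ⨆ X4 : Matrix.unitaryGroup (Fin p) ℂ,
      Norm.norm (Matrix.trace ((X3 : Matrix (Fin n) (Fin n) ℂ) * S⁻¹ * Bᴴ *
        (X4 : Matrix (Fin p) (Fin p) ℂ) *
        Matrix.of (fun (k : Fin p) (l : Fin n) =>
          if (l : ℕ) + p = n + (k : ℕ) ∧ p + (i : ℕ) + 1 ≤ (k : ℕ) + n then (1 : ℂ) else 0)))) :=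
  stmt7_general hpn A B V hV R hR β hβ0 hmono hzero hB hAA S hS hSsq i hip
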